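/- arXiv:2309.08237 — 4 statements merged into one kernel-verified Lean document; each statement's English description precedes it below -/
import Mathlib

section
/- Let W = Σ_{v∈S} a_v z^v be a Laurent polynomial in n variables over Λ with a_v ≠ 0 for all v in its finite support S ⊆ ℤ^n, let m = min_{v∈S} val(a_v), and let W_0 := Σ_{v∈S, val(a_v)=m} lc(a_v) z^v be its leading-order part, a Laurent polynomial over ℂ. If α ∈ (Λ_U)^n is a critical point of W, then the tuple of leading coefficients (lc(α_1),…,lc(α_n)) ∈ (ℂ^×)^n is a critical point of W_0. -/
open Finset

noncomputable section

/-- The Novikov field `Λ` over `ℂ`, modelled as the field of Hahn series over `ℂ`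
with value group `ℝ`. -/
abbrev Novikov : Type := HahnSeries ℝ ℂ

/-- The monomial `T^r` with coefficient `1` and exponent `r`. -/
def Tpow (r : ℝ) : Novikov := HahnSeries.single r 1

/-- The valuation `val x ∈ ℝ` of `x ∈ Λ`: the smallest exponent occurring in `x`
(junk value `0` at `x = 0`). -/
def nval (x : Novikov) : ℝ := x.order

/-- The leading coefficient `lc x ∈ ℂ`: the coefficient of `T^(val x)` in `x`. -/
def nlc (x : Novikov) : ℂ := x.leadingCoeff

variable {K : Type*} [Field K]

/-- The Laurent monomial `z^v = z₁^{v₁} ⋯ z_n^{v_n}`. -/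
def lmono {n : ℕ} (z : Fin n → K) (v : Fin n → ℤ) : K := ∏ j, z j ^ v j

/-- The value at `z` of the Laurent polynomial `W = ∑_{v ∈ S} a v • z^v`. -/
def leval {n : ℕ} (S : Finset (Fin n → ℤ)) (a : (Fin n → ℤ) → K) (z : Fin n → K) : K :=
  ∑ v ∈ S, a v * lmono z v

/-- The `i`-th partial derivative `∂W/∂z_i` of the Laurent polynomial
`W = ∑_{v ∈ S} a v • z^v`, evaluated at a point `z` with `z i ≠ 0`
(note `∂(z^v)/∂z_i = v_i • z^v / z_i`). -/
def lpderiv {n : ℕ} (S : Finset (Fin n → ℤ)) (a : (Fin n → ℤ) → K) (i : Fin n)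
    (z : Fin n → K) : K :=
  ∑ v ∈ S, a v * (v i : K) * lmono z v / z i

/-- `z` is a critical point of the Laurent polynomial `∑_{v ∈ S} a v • z^v` in `(K^×)^n`:
all coordinates of `z` are nonzero and all partial derivatives vanish at `z`. -/
def LIsCritPt {n : ℕ} (S : Finset (Fin n → ℤ)) (a : (Fin n → ℤ) → K) (z : Fin n → K) : Prop :=
  (∀ i, z i ≠ 0) ∧ ∀ i, lpderiv S a i z = 0

/-- The Hessian matrix `(∂²W/∂z_i∂z_j)(z)` of the Laurent polynomial
`W = ∑_{v ∈ S} a v • z^v` at a point `z` with nonzero coordinates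
(note `∂²(z^v)/∂z_i∂z_j = v_i (v_j - δ_{ij}) • z^v / (z_i z_j)`). -/
def lhessian {n : ℕ} (S : Finset (Fin n → ℤ)) (a : (Fin n → ℤ) → K) (z : Fin n → K) :
    Matrix (Fin n) (Fin n) K :=
  Matrix.of fun i j =>
    ∑ v ∈ S, a v * (v i : K) * ((v j : K) - if i = j then 1 else 0) * lmono z v / (z i * z j)

/-- `z` is a nondegenerate critical point: a critical point at which the Hessian
determinant is nonzero. -/
def LIsNondegCritPt {n : ℕ} (S : Finset (Fin n → ℤ)) (a : (Fin n → ℤ) → K)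
    (z : Fin n → K) : Prop :=
  LIsCritPt S a z ∧ (lhessian S a z).det ≠ 0

namespace NovikovAux

lemma lc_mul (x y : Novikov) : (x * y).leadingCoeff = x.leadingCoeff * y.leadingCoeff := by
  rcases eq_or_ne x 0 with rfl | hx
  · simp [HahnSeries.leadingCoeff_zero]
  rcases eq_or_ne y 0 with rfl | hy
  · simp [HahnSeries.leadingCoeff_zero]
  rw [HahnSeries.leadingCoeff_eq, HahnSeries.order_mul hx hy,
    HahnSeries.coeff_mul_order_add_order, HahnSeries.leadingCoeff_eq, HahnSeries.leadingCoeff_eq]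

/-- The leading coefficient as a monoid-with-zero homomorphism. -/
def lcHom : Novikov →*₀ ℂ where
  toFun := HahnSeries.leadingCoeff
  map_zero' := HahnSeries.leadingCoeff_zero
  map_one' := HahnSeries.leadingCoeff_one
  map_mul' := lc_mul

@[simp] lemma lcHom_apply (x : Novikov) : lcHom x = x.leadingCoeff := rfl

lemma order_inv (x : Novikov) : x⁻¹.order = -x.order := by
  rcases eq_or_ne x 0 with rfl | hx
  · simp
  have h1 : x⁻¹ * x = 1 := inv_mul_cancel₀ hx
  have h2 := HahnSeries.order_mul (inv_ne_zero hx) hx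
  rw [h1, HahnSeries.order_one] at h2
  linarith

lemma order_zpow_zero {x : Novikov} (h : x.order = 0) (k : ℤ) :
    (x ^ k).order = 0 := by
  cases k with
  | ofNat n =>
      rw [Int.ofNat_eq_natCast, zpow_natCast, HahnSeries.order_pow, h, smul_zero]
  | negSucc n =>
      rw [zpow_negSucc, order_inv, HahnSeries.order_pow, h, smul_zero, neg_zero]

lemma order_prod_zero {ι : Type*} (s : Finset ι) (f : ι → Novikov)
    (h : ∀ j ∈ s, f j ≠ 0) (h0 : ∀ j ∈ s, (f j).order = 0) :
    (∏ j ∈ s, f j).order = 0 := by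
  classical
  induction s using Finset.induction with
  | empty => simp [HahnSeries.order_one]
  | @insert j s hj ih =>
      rw [Finset.prod_insert hj,
        HahnSeries.order_mul (h _ (Finset.mem_insert_self _ _))
          (Finset.prod_ne_zero_iff.mpr fun i hi => h _ (Finset.mem_insert_of_mem hi)),
        h0 _ (Finset.mem_insert_self _ _),
        ih (fun i hi => h _ (Finset.mem_insert_of_mem hi))
          (fun i hi => h0 _ (Finset.mem_insert_of_mem hi)), add_zero]

lemma lc_intCast (k : ℤ) : HahnSeries.leadingCoeff ((k : Novikov)) = (k : ℂ) := by
  have : ((k : Novikov)) = HahnSeries.C ((k : ℂ)) := (map_intCast (HahnSeries.C) k).symm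
  rw [this]
  exact HahnSeries.leadingCoeff_of_single

lemma order_intCast (k : ℤ) : ((k : Novikov)).order = 0 := by
  have : ((k : Novikov)) = HahnSeries.C ((k : ℂ)) := (map_intCast (HahnSeries.C) k).symm
  rw [this]
  rcases eq_or_ne (k : ℂ) 0 with h | h
  · simp [h]
  · exact HahnSeries.order_single h

lemma intCast_ne_zero {k : ℤ} (hk : k ≠ 0) : (k : Novikov) ≠ 0 := by
  have : ((k : Novikov)) = HahnSeries.C ((k : ℂ)) := (map_intCast (HahnSeries.C) k).symm
  rw [this]
  exact HahnSeries.single_ne_zero (Int.cast_ne_zero.mpr hk)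

end NovikovAux

open scoped Classical in
/-- Part (a) of Lemma 3.5 of the paper: if `W = ∑_{v ∈ S} a v • z^v` is a Laurent polynomial
over the Novikov field `Λ` with `a v ≠ 0` on its support `S`, `m = min_{v ∈ S} val (a v)`, and
`W₀ = ∑_{v ∈ S, val (a v) = m} lc (a v) • z^v` is its leading-order part over `ℂ`, then for any
critical point `α ∈ (Λ_U)^n` of `W` the tuple of leading coefficients `(lc α₁, …, lc α_n)` is a
critical point of `W₀` in `(ℂ^×)^n`. -/
theorem leading_term_of_critical_point
    (n : ℕ) (S : Finset (Fin n → ℤ)) (a : (Fin n → ℤ) → Novikov)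
    (ha : ∀ v ∈ S, a v ≠ 0)
    (m : ℝ) (hm : ∀ v ∈ S, m ≤ nval (a v)) (hm' : ∃ v ∈ S, nval (a v) = m)
    (α : Fin n → Novikov) (hval : ∀ i, nval (α i) = 0)
    (hcrit : LIsCritPt S a α) :
    LIsCritPt (S.filter fun v => nval (a v) = m) (fun v => nlc (a v))
      (fun i => nlc (α i)) := by
  classical
  obtain ⟨hα, hd⟩ := hcrit
  have hβ : ∀ i, nlc (α i) ≠ 0 := fun i => HahnSeries.leadingCoeff_ne_zero.mpr (hα i)
  refine ⟨fun i => hβ i, fun i => ?_⟩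
  -- the additive map "coefficient at m"
  let φ : Novikov →+ ℂ :=
    { toFun := fun x => x.coeff m
      map_zero' := HahnSeries.coeff_zero
      map_add' := fun x y => HahnSeries.coeff_add }
  -- key identity over Λ, after clearing the denominator α i
  have E : ∑ v ∈ S, a v * ((v i : ℤ) : Novikov) * lmono α v = 0 := by
    have h := hd i
    rw [lpderiv] at h
    have h2 := congrArg (fun x => x * α i) h
    simp only [Finset.sum_mul, zero_mul] at h2
    rw [← h2]
    exact Finset.sum_congr rfl fun v _ => (div_mul_cancel₀ _ (hα i)).symm
  have hmono_ne : ∀ v : Fin n → ℤ, lmono α v ≠ 0 := fun v =>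
    Finset.prod_ne_zero_iff.mpr fun j _ => zpow_ne_zero _ (hα j)
  have hmono_ord : ∀ v : Fin n → ℤ, (lmono α v).order = 0 := fun v =>
    NovikovAux.order_prod_zero _ _ (fun j _ => zpow_ne_zero _ (hα j))
      (fun j _ => NovikovAux.order_zpow_zero (hval j) _)
  have hlc_mono : ∀ v : Fin n → ℤ,
      (lmono α v).leadingCoeff = lmono (fun j => nlc (α j)) v := by
    intro v
    rw [lmono, ← NovikovAux.lcHom_apply, map_prod]
    exact Finset.prod_congr rfl fun j _ => by
      rw [map_zpow₀]; rfl
  -- per-term coefficient computation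
  have key : ∀ v ∈ S, φ (a v * ((v i : ℤ) : Novikov) * lmono α v) =
      (if nval (a v) = m then nlc (a v) * ((v i : ℤ) : ℂ) * lmono (fun j => nlc (α j)) v
        else 0) := by
    intro v hv
    by_cases h0 : v i = 0
    · simp [h0]
    · have hterm : a v * ((v i : ℤ) : Novikov) * lmono α v ≠ 0 :=
        mul_ne_zero (mul_ne_zero (ha v hv) (NovikovAux.intCast_ne_zero h0)) (hmono_ne v)
      have hord : (a v * ((v i : ℤ) : Novikov) * lmono α v).order = nval (a v) := by
        rw [HahnSeries.order_mul (mul_ne_zero (ha v hv) (NovikovAux.intCast_ne_zero h0))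
            (hmono_ne v),
          HahnSeries.order_mul (ha v hv) (NovikovAux.intCast_ne_zero h0),
          NovikovAux.order_intCast, hmono_ord, add_zero, add_zero]
        rfl
      by_cases hvm : nval (a v) = m
      · rw [if_pos hvm]
        have : φ (a v * ((v i : ℤ) : Novikov) * lmono α v) =
            (a v * ((v i : ℤ) : Novikov) * lmono α v).leadingCoeff := by
          show (a v * ((v i : ℤ) : Novikov) * lmono α v).coeff m = _
          rw [HahnSeries.leadingCoeff_eq, hord, hvm]
        rw [this, NovikovAux.lc_mul, NovikovAux.lc_mul, NovikovAux.lc_intCast, hlc_mono]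
        rfl
      · rw [if_neg hvm]
        show (a v * ((v i : ℤ) : Novikov) * lmono α v).coeff m = 0
        exact HahnSeries.coeff_eq_zero_of_lt_order
          (by rw [hord]; exact lt_of_le_of_ne (hm v hv) (Ne.symm hvm))
  -- sum the per-term identities
  have hsum : ∑ v ∈ S,
      (if nval (a v) = m then nlc (a v) * ((v i : ℤ) : ℂ) * lmono (fun j => nlc (α j)) v
        else 0) = 0 := by
    rw [← Finset.sum_congr rfl key, ← map_sum, E, map_zero]
  rw [← Finset.sum_filter] at hsum
  rw [lpderiv, ← Finset.sum_div, hsum, zero_div]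

end
end

section
/- Let ε > 0 be real. Let a, d be nonzero elements of Λ_+ and b, c ∈ Λ_+ such that a·d − b·c ≠ 0, val(a) ≤ min(val(b), val(c)), val(d) ≤ min(val(b), val(c)), and val(a) + val(d) < val(b) + val(c) (with the convention val(0) = +∞). Let P = Σ_{(i,j)} λ_{(i,j)} z_1^i z_2^j and Q = Σ_{(i,j)} η_{(i,j)} z_1^i z_2^j be polynomials over Λ all of whose monomials have total degree i + j ≥ 2, whose coefficients satisfy val(λ_{(i,j)}) ≥ val(a) and val(η_{(i,j)}) ≥ val(d) for all (i,j), as well as val(λ_{(i,j)}) ≥ val(d) whenever j ≥ 1 and val(η_{(i,j)}) ≥ val(a) whenever i ≥ 1. Define F(z_1, z_2) = (a·z_1 + b·z_2 + P(z_1,z_2), c·z_1 + d·z_2 + Q(z_1,z_2)). Then for every pair C_1, C_2 ∈ Λ such that C_1 = 0 or val(C_1) > val(a) + ε, and C_2 = 0 or val(C_2) > val(d) + ε, the equation F(z_1, z_2) = (C_1, C_2) has a unique solution (z_1, z_2) with each z_i zero or of valuation val(z_i) ≥ ε. -/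
open Finset

noncomputable section

variable {K : Type*} [Field K]

/-- The valuation `val : Λ → ℝ ∪ {+∞}` with the convention `val 0 = +∞`. -/
def nvalT (x : Novikov) : WithTop ℝ := x.orderTop

section ContractionAux

lemma le_nvalT_add {M : WithTop ℝ} {x y : Novikov} (hx : M ≤ nvalT x) (hy : M ≤ nvalT y) :
    M ≤ nvalT (x + y) :=
  le_trans (le_min hx hy) HahnSeries.min_orderTop_le_orderTop_add

lemma le_nvalT_sub' {M : WithTop ℝ} {x y : Novikov} (hx : M ≤ nvalT x) (hy : M ≤ nvalT y) :
    M ≤ nvalT (x - y) :=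
  le_trans (le_min hx hy) HahnSeries.min_orderTop_le_orderTop_sub

lemma le_nvalT_mul {M N : WithTop ℝ} {x y : Novikov} (hx : M ≤ nvalT x) (hy : N ≤ nvalT y) :
    M + N ≤ nvalT (x * y) :=
  le_trans (add_le_add hx hy) HahnSeries.orderTop_add_le_mul

lemma nvalT_neg (x : Novikov) : nvalT (-x) = nvalT x := HahnSeries.orderTop_neg

lemma le_nvalT_pow {M : ℝ} {x : Novikov} (hx : (M : WithTop ℝ) ≤ nvalT x) (n : ℕ) :
    ((n * M : ℝ) : WithTop ℝ) ≤ nvalT (x ^ n) := by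
  induction n with
  | zero => simp [nvalT, HahnSeries.orderTop_one]
  | succ n ih =>
      rw [pow_succ]
      refine le_trans (le_of_eq ?_) (le_nvalT_mul ih hx)
      rw [← WithTop.coe_add]
      congr 1
      push_cast
      ring

lemma le_nvalT_sum {ι : Type*} {M : WithTop ℝ} (S : Finset ι) (f : ι → Novikov)
    (h : ∀ p ∈ S, M ≤ nvalT (f p)) : M ≤ nvalT (∑ p ∈ S, f p) := by
  classical
  induction S using Finset.induction_on with
  | empty => simp [nvalT]
  | insert _ _ hnot ih =>
      rw [Finset.sum_insert hnot]
      exact le_nvalT_add (h _ (Finset.mem_insert_self _ _))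
        (ih fun p hp => h p (Finset.mem_insert_of_mem hp))

lemma eq_zero_of_forall_lt_nvalT {x : Novikov} (h : ∀ M : ℝ, (M : WithTop ℝ) < nvalT x) :
    x = 0 := by
  by_contra hx
  have h1 := h x.order
  rw [nvalT, ← HahnSeries.order_eq_orderTop_of_ne_zero hx] at h1
  exact lt_irrefl _ h1

lemma lt_nvalT_of_coeff_eq_zero {x : Novikov} {M : ℝ} (h : ∀ r : ℝ, r ≤ M → x.coeff r = 0) :
    (M : WithTop ℝ) < nvalT x := by
  rcases eq_or_ne x 0 with rfl | hx
  · simp [nvalT]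
  · rw [nvalT, ← HahnSeries.order_eq_orderTop_of_ne_zero hx, WithTop.coe_lt_coe]
    by_contra hc
    push_neg at hc
    exact hx (HahnSeries.coeff_order_eq_zero.mp (h _ hc))

lemma le_add_nvalT_add {M e : WithTop ℝ} {x y : Novikov}
    (hx : M ≤ e + nvalT x) (hy : M ≤ e + nvalT y) : M ≤ e + nvalT (x + y) := by
  rcases le_total (nvalT x) (nvalT y) with h | h
  · exact le_trans hx (add_le_add_right
      (le_trans (le_of_eq (min_eq_left h).symm) HahnSeries.min_orderTop_le_orderTop_add) _)
  · exact le_trans hy (add_le_add_right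
      (le_trans (le_of_eq (min_eq_right h).symm) HahnSeries.min_orderTop_le_orderTop_add) _)

lemma nvalT_pow_sub_pow {x u : Novikov} {e : ℝ}
    (hx : (e : WithTop ℝ) ≤ nvalT x) (hu : (e : WithTop ℝ) ≤ nvalT u)
    {V : WithTop ℝ} (hxu : V ≤ nvalT (x - u)) (i : ℕ) :
    ((i * e : ℝ) : WithTop ℝ) + V ≤ (e : WithTop ℝ) + nvalT (x ^ i - u ^ i) := by
  induction i with
  | zero => simp [nvalT]
  | succ i ih =>
      have hdecomp : x ^ (i + 1) - u ^ (i + 1) = x * (x ^ i - u ^ i) + (x - u) * u ^ i := by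
        ring
      rw [hdecomp]
      have hcoe : (((i + 1 : ℕ) * e : ℝ) : WithTop ℝ) = (e : WithTop ℝ) + ((i * e : ℝ) : WithTop ℝ) := by
        rw [← WithTop.coe_add]; congr 1; push_cast; ring
      apply le_add_nvalT_add
      · -- first term
        have h1 : (e : WithTop ℝ) + ((e : WithTop ℝ) + nvalT (x ^ i - u ^ i)) ≤
            (e : WithTop ℝ) + nvalT (x * (x ^ i - u ^ i)) :=
          add_le_add_right (le_nvalT_mul hx le_rfl) _
        refine le_trans ?_ (le_trans (add_le_add_right ih _) h1)
        rw [hcoe, add_assoc]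
      · -- second term
        have h1 : V + ((i * e : ℝ) : WithTop ℝ) ≤ nvalT ((x - u) * u ^ i) :=
          le_nvalT_mul hxu (le_nvalT_pow hu i)
        refine le_trans ?_ (add_le_add_right h1 _)
        rw [hcoe]
        have : (e : WithTop ℝ) + (V + ((i * e : ℝ) : WithTop ℝ)) =
            (e : WithTop ℝ) + ((i * e : ℝ) : WithTop ℝ) + V := by abel
        rw [this, add_assoc]

lemma nvalT_mono_sub {x y u v : Novikov} {e : ℝ}
    (hx : (e : WithTop ℝ) ≤ nvalT x) (hy : (e : WithTop ℝ) ≤ nvalT y)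
    (hu : (e : WithTop ℝ) ≤ nvalT u) (hv : (e : WithTop ℝ) ≤ nvalT v)
    {V : WithTop ℝ} (hxu : V ≤ nvalT (x - u)) (hyv : V ≤ nvalT (y - v)) (i j : ℕ) :
    (((i + j : ℕ) * e : ℝ) : WithTop ℝ) + V ≤
      (e : WithTop ℝ) + nvalT (x ^ i * y ^ j - u ^ i * v ^ j) := by
  have hdecomp : x ^ i * y ^ j - u ^ i * v ^ j
      = (x ^ i - u ^ i) * y ^ j + u ^ i * (y ^ j - v ^ j) := by ring
  rw [hdecomp]
  have hcoe : (((i + j : ℕ) * e : ℝ) : WithTop ℝ)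
      = ((i * e : ℝ) : WithTop ℝ) + ((j * e : ℝ) : WithTop ℝ) := by
    rw [← WithTop.coe_add]; congr 1; push_cast; ring
  apply le_add_nvalT_add
  · have h1 : ((e : WithTop ℝ) + nvalT (x ^ i - u ^ i)) + ((j * e : ℝ) : WithTop ℝ) ≤
        (e : WithTop ℝ) + nvalT ((x ^ i - u ^ i) * y ^ j) := by
      rw [add_assoc]
      exact add_le_add_right (le_nvalT_mul le_rfl (le_nvalT_pow hy j)) _
    refine le_trans ?_ (le_trans (add_le_add_left (nvalT_pow_sub_pow hx hu hxu i) _) h1)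
    rw [hcoe]
    apply le_of_eq
    abel
  · have h1 : ((i * e : ℝ) : WithTop ℝ) + ((j * e : ℝ) : WithTop ℝ) + V ≤
        ((i * e : ℝ) : WithTop ℝ) + ((e : WithTop ℝ) + nvalT (y ^ j - v ^ j)) := by
      rw [add_assoc]
      exact add_le_add_right (nvalT_pow_sub_pow hy hv hyv j) _
    have h2 : (e : WithTop ℝ) + (((i * e : ℝ) : WithTop ℝ) + nvalT (y ^ j - v ^ j)) ≤
        (e : WithTop ℝ) + nvalT (u ^ i * (y ^ j - v ^ j)) :=
      add_le_add_right (le_nvalT_mul (le_nvalT_pow hu i) le_rfl) _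
    refine le_trans (le_of_eq ?_) (le_trans h1 (le_trans (le_of_eq ?_) h2))
    · rw [hcoe]
    · abel

end ContractionAux

section Limits

lemma novikov_limit (u : ℕ → Novikov)
    (h : ∀ M : ℝ, ∃ N : ℕ, ∀ m n : ℕ, N ≤ m → N ≤ n → (M : WithTop ℝ) < nvalT (u m - u n)) :
    ∃ L : Novikov, ∀ M : ℝ, ∃ N : ℕ, ∀ n : ℕ, N ≤ n → (M : WithTop ℝ) < nvalT (L - u n) := by
  classical
  choose N hN using h
  set f : ℝ → ℂ := fun r => (u (N r)).coeff r with hfdef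
  have key : ∀ r : ℝ, ∀ n, N r ≤ n → (u n).coeff r = f r := by
    intro r n hn
    have h0 : (u n - u (N r)).coeff r = 0 :=
      HahnSeries.coeff_eq_zero_of_lt_orderTop (hN r n (N r) hn le_rfl)
    rw [HahnSeries.coeff_sub] at h0
    simpa [hfdef] using sub_eq_zero.mp h0
  have stable : ∀ M : ℝ, ∀ r : ℝ, r ≤ M → f r = (u (N M)).coeff r := by
    intro M r hr
    have h1 : f r = (u (max (N r) (N M))).coeff r := (key r _ (le_max_left _ _)).symm
    have h2 : (u (max (N r) (N M)) - u (N M)).coeff r = 0 := by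
      refine HahnSeries.coeff_eq_zero_of_lt_orderTop ?_
      exact lt_of_le_of_lt (WithTop.coe_le_coe.mpr hr) (hN M _ _ (le_max_right _ _) le_rfl)
    rw [HahnSeries.coeff_sub] at h2
    rw [h1, sub_eq_zero.mp h2]
  have hWF : (Function.support f).IsWF := by
    rw [Set.isWF_iff_no_descending_seq]
    intro g hg hmem
    have hmem' : ∀ n : ℕ, g n ∈ (u (N (g 0))).support := by
      intro n
      have hle : g n ≤ g 0 := hg.antitone (Nat.zero_le n)
      have h3 : f (g n) ≠ 0 := hmem n
      rw [stable (g 0) (g n) hle] at h3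
      exact h3
    exact (Set.isWF_iff_no_descending_seq.mp (u (N (g 0))).isWF_support) g hg hmem'
  refine ⟨⟨f, hWF.isPWO⟩, fun M => ⟨N M, fun n hn => ?_⟩⟩
  apply lt_nvalT_of_coeff_eq_zero
  intro r hr
  rw [HahnSeries.coeff_sub]
  have h1 : f r = (u (max (N r) n)).coeff r := (key r _ (le_max_left _ _)).symm
  have h2 : (u (max (N r) n) - u n).coeff r = 0 := by
    refine HahnSeries.coeff_eq_zero_of_lt_orderTop ?_
    exact lt_of_le_of_lt (WithTop.coe_le_coe.mpr hr)
      (hN M _ _ (le_trans hn (le_max_right _ _)) hn)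
  rw [HahnSeries.coeff_sub] at h2
  show f r - (u n).coeff r = 0
  rw [h1, sub_eq_zero.mp h2, sub_self]

end Limits

section Pairs

def Vm (z : Novikov × Novikov) : WithTop ℝ := min (nvalT z.1) (nvalT z.2)

lemma le_Vm_iff {M : WithTop ℝ} {z : Novikov × Novikov} :
    M ≤ Vm z ↔ M ≤ nvalT z.1 ∧ M ≤ nvalT z.2 := le_min_iff

lemma le_Vm_add {M : WithTop ℝ} {x y : Novikov × Novikov}
    (hx : M ≤ Vm x) (hy : M ≤ Vm y) : M ≤ Vm (x + y) := by
  rw [le_Vm_iff] at hx hy ⊢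
  exact ⟨by rw [Prod.fst_add]; exact le_nvalT_add hx.1 hy.1,
    by rw [Prod.snd_add]; exact le_nvalT_add hx.2 hy.2⟩

lemma Vm_neg (x : Novikov × Novikov) : Vm (-x) = Vm x := by
  simp [Vm, nvalT_neg]

lemma min_Vm_le_Vm_add {x y : Novikov × Novikov} : min (Vm x) (Vm y) ≤ Vm (x + y) :=
  le_Vm_add (min_le_left _ _) (min_le_right _ _)

end Pairs


set_option maxHeartbeats 2000000 in
/-- Lemma A.1 of the paper. Let `F(z₁,z₂) = (a z₁ + b z₂ + P(z₁,z₂), c z₁ + d z₂ + Q(z₁,z₂))`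
where `a, d` are nonzero elements of `Λ₊`, `b, c ∈ Λ₊`, `ad - bc ≠ 0`,
`val a ≤ min (val b) (val c)`, `val d ≤ min (val b) (val c)`,
`val a + val d < val b + val c`, and `P, Q` are polynomials over `Λ` all of whose monomials
have total degree `≥ 2`, with `val λ_{ij} ≥ val a`, `val η_{ij} ≥ val d` for all `(i,j)`,
`val λ_{ij} ≥ val d` whenever `j ≥ 1`, and `val η_{ij} ≥ val a` whenever `i ≥ 1`. Then for
every `C₁, C₂ ∈ Λ` with (`C₁ = 0` or) `val C₁ > val a + ε` and (`C₂ = 0` or)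
`val C₂ > val d + ε`, the equation `F(z₁, z₂) = (C₁, C₂)` has a unique solution with each
`z_i` zero or of valuation `≥ ε`. -/
theorem contraction_lemma
    (ε : ℝ) (hε : 0 < ε)
    (a b c d : Novikov) (ha0 : a ≠ 0) (hd0 : d ≠ 0)
    (haP : 0 < nvalT a) (hdP : 0 < nvalT d) (hbP : 0 < nvalT b) (hcP : 0 < nvalT c)
    (hdet : a * d - b * c ≠ 0)
    (hab : nvalT a ≤ nvalT b) (hac : nvalT a ≤ nvalT c)
    (hdb : nvalT d ≤ nvalT b) (hdc : nvalT d ≤ nvalT c)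
    (hprod : nvalT a + nvalT d < nvalT b + nvalT c)
    (SP SQ : Finset (ℕ × ℕ)) (lam eta : ℕ × ℕ → Novikov)
    (hSP : ∀ p ∈ SP, 2 ≤ p.1 + p.2) (hSQ : ∀ p ∈ SQ, 2 ≤ p.1 + p.2)
    (hlamA : ∀ p ∈ SP, nvalT a ≤ nvalT (lam p))
    (hetaD : ∀ p ∈ SQ, nvalT d ≤ nvalT (eta p))
    (hlamD : ∀ p ∈ SP, 1 ≤ p.2 → nvalT d ≤ nvalT (lam p))
    (hetaA : ∀ p ∈ SQ, 1 ≤ p.1 → nvalT a ≤ nvalT (eta p)) :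
    ∀ C₁ C₂ : Novikov,
      nvalT a + (ε : WithTop ℝ) < nvalT C₁ →
      nvalT d + (ε : WithTop ℝ) < nvalT C₂ →
      ∃! z : Novikov × Novikov,
        ((ε : WithTop ℝ) ≤ nvalT z.1 ∧ (ε : WithTop ℝ) ≤ nvalT z.2) ∧
        a * z.1 + b * z.2 + (∑ p ∈ SP, lam p * z.1 ^ p.1 * z.2 ^ p.2) = C₁ ∧
        c * z.1 + d * z.2 + (∑ p ∈ SQ, eta p * z.1 ^ p.1 * z.2 ^ p.2) = C₂ := by
  intro C₁ C₂ hC₁ hC₂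
  -- setup
  have hΔ0 : a * d - b * c ≠ 0 := hdet
  set E : Novikov := (a * d - b * c)⁻¹ with hEdef
  have hE0 : E ≠ 0 := inv_ne_zero hΔ0
  have hEΔ : E * (a * d - b * c) = 1 := inv_mul_cancel₀ hΔ0
  set A : ℝ := a.order with hAdef
  set D : ℝ := d.order with hDdef
  have hvA : nvalT a = ((A : ℝ) : WithTop ℝ) :=
    (HahnSeries.order_eq_orderTop_of_ne_zero ha0).symm
  have hvD : nvalT d = ((D : ℝ) : WithTop ℝ) :=
    (HahnSeries.order_eq_orderTop_of_ne_zero hd0).symm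
  -- valuation of the determinant and its inverse
  have hadval : nvalT (a * d) = ((A + D : ℝ) : WithTop ℝ) := by
    rw [nvalT, ← HahnSeries.order_eq_orderTop_of_ne_zero (mul_ne_zero ha0 hd0),
      HahnSeries.order_mul ha0 hd0]
  have hbcval : nvalT (a * d) < nvalT (b * c) := by
    rw [hadval, WithTop.coe_add, ← hvA, ← hvD]
    exact lt_of_lt_of_le hprod
      (le_trans (add_le_add le_rfl le_rfl) HahnSeries.orderTop_add_le_mul)
  have hΔval : nvalT (a * d - b * c) = ((A + D : ℝ) : WithTop ℝ) := by
    rw [nvalT, HahnSeries.orderTop_sub hbcval]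
    exact hadval
  have hΔord : (a * d - b * c).order = A + D := by
    have := hΔval
    rw [nvalT, ← HahnSeries.order_eq_orderTop_of_ne_zero hΔ0] at this
    exact_mod_cast this
  have hEval : nvalT E = ((-(A + D) : ℝ) : WithTop ℝ) := by
    have h1 : (a * d - b * c).order + E.order = 0 := by
      rw [← HahnSeries.order_mul hΔ0 hE0, mul_inv_cancel₀ hΔ0, HahnSeries.order_one]
    rw [nvalT, ← HahnSeries.order_eq_orderTop_of_ne_zero hE0]
    congr 1
    rw [hΔord] at h1
    linarith
  -- abbreviations
  set ε' : WithTop ℝ := ((ε : ℝ) : WithTop ℝ) with hε'def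
  have hεnonneg : (0 : WithTop ℝ) ≤ ε' := by rw [hε'def]; exact_mod_cast hε.le
  set Pv : Novikov × Novikov → Novikov :=
    fun z => ∑ p ∈ SP, lam p * z.1 ^ p.1 * z.2 ^ p.2 with hPvdef
  set Qv : Novikov × Novikov → Novikov :=
    fun z => ∑ p ∈ SQ, eta p * z.1 ^ p.1 * z.2 ^ p.2 with hQvdef
  set Φ : Novikov × Novikov → Novikov × Novikov := fun z =>
    (E * (d * (C₁ - Pv z) - b * (C₂ - Qv z)),
     E * (a * (C₂ - Qv z) - c * (C₁ - Pv z))) with hΦdef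
  set Bp : Novikov × Novikov → Prop := fun z => ε' ≤ nvalT z.1 ∧ ε' ≤ nvalT z.2 with hBpdef
  -- lower bound for P, Q on the ball
  have hge : ∀ (S : Finset (ℕ × ℕ)) (co : ℕ × ℕ → Novikov) (x : Novikov)
      (_hS : ∀ p ∈ S, 2 ≤ p.1 + p.2) (_hco : ∀ p ∈ S, nvalT x ≤ nvalT (co p))
      (z : Novikov × Novikov), Bp z →
      nvalT x + ((2 * ε : ℝ) : WithTop ℝ) ≤
        nvalT (∑ p ∈ S, co p * z.1 ^ p.1 * z.2 ^ p.2) := by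
    intro S co x hS hco z hz
    apply le_nvalT_sum
    intro p hp
    have h1 : nvalT x + ((p.1 * ε : ℝ) : WithTop ℝ) + ((p.2 * ε : ℝ) : WithTop ℝ) ≤
        nvalT (co p * z.1 ^ p.1 * z.2 ^ p.2) :=
      le_nvalT_mul (le_nvalT_mul (hco p hp) (le_nvalT_pow hz.1 p.1)) (le_nvalT_pow hz.2 p.2)
    refine le_trans ?_ h1
    rw [add_assoc, ← WithTop.coe_add]
    apply add_le_add_right
    apply WithTop.coe_le_coe.mpr
    have h2 : (2 : ℝ) ≤ (p.1 : ℝ) + (p.2 : ℝ) := by exact_mod_cast hS p hp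
    nlinarith [hε.le]
  
  have hPge : ∀ z, Bp z → nvalT a + ((2 * ε : ℝ) : WithTop ℝ) ≤ nvalT (Pv z) :=
    fun z hz => hge SP lam a hSP hlamA z hz
  have hQge : ∀ z, Bp z → nvalT d + ((2 * ε : ℝ) : WithTop ℝ) ≤ nvalT (Qv z) :=
    fun z hz => hge SQ eta d hSQ hetaD z hz
  -- difference bounds for P, Q
  have hdiffb : ∀ (S : Finset (ℕ × ℕ)) (co : ℕ × ℕ → Novikov) (x : Novikov)
      (_hS : ∀ p ∈ S, 2 ≤ p.1 + p.2) (_hco : ∀ p ∈ S, nvalT x ≤ nvalT (co p))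
      (z w : Novikov × Novikov), Bp z → Bp w →
      nvalT x + ε' + Vm (z - w) ≤
        nvalT ((∑ p ∈ S, co p * z.1 ^ p.1 * z.2 ^ p.2)
          - ∑ p ∈ S, co p * w.1 ^ p.1 * w.2 ^ p.2) := by
    intro S co x hS hco z w hz hw
    rw [← Finset.sum_sub_distrib]
    apply le_nvalT_sum
    intro p hp
    have hfac : co p * z.1 ^ p.1 * z.2 ^ p.2 - co p * w.1 ^ p.1 * w.2 ^ p.2
        = co p * (z.1 ^ p.1 * z.2 ^ p.2 - w.1 ^ p.1 * w.2 ^ p.2) := by ring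
    rw [hfac]
    have hxu : Vm (z - w) ≤ nvalT (z.1 - w.1) := by
      have := min_le_left (nvalT (z - w).1) (nvalT (z - w).2)
      rwa [Prod.fst_sub] at this
    have hyv : Vm (z - w) ≤ nvalT (z.2 - w.2) := by
      have := min_le_right (nvalT (z - w).1) (nvalT (z - w).2)
      rwa [Prod.snd_sub] at this
    have hm := nvalT_mono_sub hz.1 hz.2 hw.1 hw.2 hxu hyv p.1 p.2
    -- cancel the ε on both sides
    have h2 : ε' + (ε' + Vm (z - w)) ≤ ε' + nvalT (z.1 ^ p.1 * z.2 ^ p.2 - w.1 ^ p.1 * w.2 ^ p.2) := by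
      refine le_trans ?_ hm
      rw [← add_assoc, hε'def, ← WithTop.coe_add]
      apply add_le_add_left
      apply WithTop.coe_le_coe.mpr
      have h3 : (2 : ℝ) ≤ (p.1 : ℝ) + (p.2 : ℝ) := by exact_mod_cast hS p hp
      have h4 : ((p.1 + p.2 : ℕ) : ℝ) = (p.1 : ℝ) + (p.2 : ℝ) := by push_cast; ring
      rw [h4]
      nlinarith [hε.le]
    have h5 : ε' + Vm (z - w) ≤ nvalT (z.1 ^ p.1 * z.2 ^ p.2 - w.1 ^ p.1 * w.2 ^ p.2) := by
      have hne : ε' ≠ ⊤ := by rw [hε'def]; exact WithTop.coe_ne_top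
      exact (WithTop.add_le_add_iff_left hne).mp h2
    rw [add_assoc]
    exact le_nvalT_mul (hco p hp) h5
  have hPdiff : ∀ z w, Bp z → Bp w →
      nvalT a + ε' + Vm (z - w) ≤ nvalT (Pv z - Pv w) :=
    fun z w hz hw => hdiffb SP lam a hSP hlamA z w hz hw
  have hQdiff : ∀ z w, Bp z → Bp w →
      nvalT d + ε' + Vm (z - w) ≤ nvalT (Qv z - Qv w) :=
    fun z w hz hw => hdiffb SQ eta d hSQ hetaD z w hz hw
  -- bounds on C - P, C - Q
  have hε2 : ε' ≤ ((2 * ε : ℝ) : WithTop ℝ) := by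
    rw [hε'def]; exact WithTop.coe_le_coe.mpr (by linarith)
  have hCP : ∀ z, Bp z → nvalT a + ε' ≤ nvalT (C₁ - Pv z) := by
    intro z hz
    exact le_nvalT_sub' hC₁.le (le_trans (add_le_add_right hε2 _) (hPge z hz))
  have hCQ : ∀ z, Bp z → nvalT d + ε' ≤ nvalT (C₂ - Qv z) := by
    intro z hz
    exact le_nvalT_sub' hC₂.le (le_trans (add_le_add_right hε2 _) (hQge z hz))
  -- Φ maps the ball into itself
  have hself : ∀ z, Bp z → Bp (Φ z) := by
    intro z hz
    constructor
    · show ε' ≤ nvalT (E * (d * (C₁ - Pv z) - b * (C₂ - Qv z)))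
      have ht1 : nvalT d + (nvalT a + ε') ≤ nvalT (d * (C₁ - Pv z)) :=
        le_nvalT_mul le_rfl (hCP z hz)
      have ht2 : nvalT a + (nvalT d + ε') ≤ nvalT (b * (C₂ - Qv z)) :=
        le_nvalT_mul hab (hCQ z hz)
      have hinner : ((A + D : ℝ) : WithTop ℝ) + ε' ≤
          nvalT (d * (C₁ - Pv z) - b * (C₂ - Qv z)) := by
        refine le_nvalT_sub' (le_trans (le_of_eq ?_) ht1) (le_trans (le_of_eq ?_) ht2)
        · rw [hvA, hvD, WithTop.coe_add]; abel
        · rw [hvA, hvD, WithTop.coe_add]; abel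
      have hfinal := le_nvalT_mul (le_of_eq hEval.symm) hinner
      refine le_trans (le_of_eq ?_) hfinal
      rw [← add_assoc, ← WithTop.coe_add, neg_add_cancel, WithTop.coe_zero, zero_add]
    · show ε' ≤ nvalT (E * (a * (C₂ - Qv z) - c * (C₁ - Pv z)))
      have ht1 : nvalT a + (nvalT d + ε') ≤ nvalT (a * (C₂ - Qv z)) :=
        le_nvalT_mul le_rfl (hCQ z hz)
      have ht2 : nvalT d + (nvalT a + ε') ≤ nvalT (c * (C₁ - Pv z)) :=
        le_nvalT_mul hdc (hCP z hz)
      have hinner : ((A + D : ℝ) : WithTop ℝ) + ε' ≤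
          nvalT (a * (C₂ - Qv z) - c * (C₁ - Pv z)) := by
        refine le_nvalT_sub' (le_trans (le_of_eq ?_) ht1) (le_trans (le_of_eq ?_) ht2)
        · rw [hvA, hvD, WithTop.coe_add]; abel
        · rw [hvA, hvD, WithTop.coe_add]; abel
      have hfinal := le_nvalT_mul (le_of_eq hEval.symm) hinner
      refine le_trans (le_of_eq ?_) hfinal
      rw [← add_assoc, ← WithTop.coe_add, neg_add_cancel, WithTop.coe_zero, zero_add]
  -- contraction estimate
  have hcontr : ∀ z w, Bp z → Bp w → ε' + Vm (z - w) ≤ Vm (Φ z - Φ w) := by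
    intro z w hz hw
    have hP := hPdiff z w hz hw
    have hQ := hQdiff z w hz hw
    rw [le_Vm_iff]
    constructor
    · have hrw : (Φ z - Φ w).1 = E * (b * (Qv z - Qv w) - d * (Pv z - Pv w)) := by
        show (Φ z).1 - (Φ w).1 = _
        rw [hΦdef]
        ring
      rw [hrw]
      have ht1 : nvalT a + (nvalT d + ε' + Vm (z - w)) ≤ nvalT (b * (Qv z - Qv w)) :=
        le_nvalT_mul hab hQ
      have ht2 : nvalT d + (nvalT a + ε' + Vm (z - w)) ≤ nvalT (d * (Pv z - Pv w)) :=
        le_nvalT_mul le_rfl hP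
      have hinner : ((A + D : ℝ) : WithTop ℝ) + (ε' + Vm (z - w)) ≤
          nvalT (b * (Qv z - Qv w) - d * (Pv z - Pv w)) := by
        refine le_nvalT_sub' (le_trans (le_of_eq ?_) ht1) (le_trans (le_of_eq ?_) ht2)
        · rw [hvA, hvD, WithTop.coe_add]; abel
        · rw [hvA, hvD, WithTop.coe_add]; abel
      have hfinal := le_nvalT_mul (le_of_eq hEval.symm) hinner
      refine le_trans (le_of_eq ?_) hfinal
      rw [← add_assoc, ← WithTop.coe_add, neg_add_cancel, WithTop.coe_zero, zero_add]
    · have hrw : (Φ z - Φ w).2 = E * (c * (Pv z - Pv w) - a * (Qv z - Qv w)) := by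
        show (Φ z).2 - (Φ w).2 = _
        rw [hΦdef]
        ring
      rw [hrw]
      have ht1 : nvalT d + (nvalT a + ε' + Vm (z - w)) ≤ nvalT (c * (Pv z - Pv w)) :=
        le_nvalT_mul hdc hP
      have ht2 : nvalT a + (nvalT d + ε' + Vm (z - w)) ≤ nvalT (a * (Qv z - Qv w)) :=
        le_nvalT_mul le_rfl hQ
      have hinner : ((A + D : ℝ) : WithTop ℝ) + (ε' + Vm (z - w)) ≤
          nvalT (c * (Pv z - Pv w) - a * (Qv z - Qv w)) := by
        refine le_nvalT_sub' (le_trans (le_of_eq ?_) ht1) (le_trans (le_of_eq ?_) ht2)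
        · rw [hvA, hvD, WithTop.coe_add]; abel
        · rw [hvA, hvD, WithTop.coe_add]; abel
      have hfinal := le_nvalT_mul (le_of_eq hEval.symm) hinner
      refine le_trans (le_of_eq ?_) hfinal
      rw [← add_assoc, ← WithTop.coe_add, neg_add_cancel, WithTop.coe_zero, zero_add]
  
  -- fixed points of Φ are exactly solutions of the system
  have hsol : ∀ z : Novikov × Novikov, Φ z = z ↔
      (a * z.1 + b * z.2 + Pv z = C₁ ∧ c * z.1 + d * z.2 + Qv z = C₂) := by
    intro z
    constructor
    · intro h
      have h1 : E * (d * (C₁ - Pv z) - b * (C₂ - Qv z)) = z.1 := congrArg Prod.fst h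
      have h2 : E * (a * (C₂ - Qv z) - c * (C₁ - Pv z)) = z.2 := congrArg Prod.snd h
      constructor
      · linear_combination (-a) * h1 + (-b) * h2 + (C₁ - Pv z) * hEΔ
      · linear_combination (-c) * h1 + (-d) * h2 + (C₂ - Qv z) * hEΔ
    · rintro ⟨h1, h2⟩
      have e1 : E * (d * (C₁ - Pv z) - b * (C₂ - Qv z)) = z.1 := by
        linear_combination (-(E * d)) * h1 + (E * b) * h2 + z.1 * hEΔ
      have e2 : E * (a * (C₂ - Qv z) - c * (C₁ - Pv z)) = z.2 := by
        linear_combination (E * c) * h1 + (-(E * a)) * h2 + z.2 * hEΔ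
      show (_, _) = z
      rw [e1, e2]
  -- the iteration
  set u : ℕ → Novikov × Novikov :=
    fun n => Nat.rec ((0 : Novikov), (0 : Novikov)) (fun _ ih => Φ ih) n with hudef
  have hu0 : u 0 = ((0 : Novikov), (0 : Novikov)) := rfl
  have husucc : ∀ n, u (n + 1) = Φ (u n) := fun n => rfl
  have hB : ∀ n, Bp (u n) := by
    intro n
    induction n with
    | zero =>
        constructor
        · show ε' ≤ nvalT (0 : Novikov)
          simp [nvalT]
        · show ε' ≤ nvalT (0 : Novikov)
          simp [nvalT]
    | succ n ih => rw [husucc]; exact hself _ ih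
  have hstep : ∀ n : ℕ, (((n + 1 : ℕ) * ε : ℝ) : WithTop ℝ) ≤ Vm (u (n + 1) - u n) := by
    intro n
    induction n with
    | zero =>
        have h1 : u (0 + 1) - u 0 = u 1 := by rw [hu0]; ext <;> simp
        rw [h1]
        have h2 := hB 1
        rw [le_Vm_iff]
        refine ⟨le_trans (le_of_eq ?_) h2.1, le_trans (le_of_eq ?_) h2.2⟩ <;>
          · rw [hε'def]; norm_num
    | succ n ih =>
        have h1 : u (n + 1 + 1) - u (n + 1) = Φ (u (n + 1)) - Φ (u n) := rfl
        rw [h1]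
        refine le_trans ?_ (le_trans (add_le_add_right ih ε') (hcontr _ _ (hB (n+1)) (hB n)))
        rw [hε'def, ← WithTop.coe_add]
        apply WithTop.coe_le_coe.mpr
        push_cast
        nlinarith [hε.le]
  have htel : ∀ n m : ℕ, n ≤ m → (((n + 1 : ℕ) * ε : ℝ) : WithTop ℝ) ≤ Vm (u m - u n) := by
    intro n m h
    induction m, h using Nat.le_induction with
    | base =>
        have : u n - u n = 0 := sub_self _
        rw [this]
        rw [le_Vm_iff]
        constructor <;> · show _ ≤ nvalT (0 : Novikov); simp [nvalT]
    | succ m hm ih =>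
        have hsplit : u (m + 1) - u n = (u (m + 1) - u m) + (u m - u n) := by abel
        rw [hsplit]
        refine le_Vm_add (le_trans ?_ (hstep m)) ih
        apply WithTop.coe_le_coe.mpr
        have : (n : ℝ) ≤ (m : ℝ) := by exact_mod_cast hm
        push_cast
        nlinarith [hε.le]
  -- Cauchy property
  have hcau : ∀ M : ℝ, ∃ N : ℕ, ∀ m n : ℕ, N ≤ m → N ≤ n →
      (M : WithTop ℝ) < Vm (u m - u n) := by
    intro M
    obtain ⟨N, hN⟩ := exists_nat_gt (M / ε)
    refine ⟨N, fun m n hm hn => ?_⟩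
    have hlt : ∀ k : ℕ, N ≤ k → M < ((k + 1 : ℕ) : ℝ) * ε := by
      intro k hk
      rw [div_lt_iff₀ hε] at hN
      have : (N : ℝ) ≤ (k : ℝ) := by exact_mod_cast hk
      push_cast
      nlinarith
    rcases le_total n m with h | h
    · exact lt_of_lt_of_le (WithTop.coe_lt_coe.mpr (hlt n hn)) (htel n m h)
    · have hneg : u m - u n = -(u n - u m) := by abel
      rw [hneg, Vm_neg]
      exact lt_of_lt_of_le (WithTop.coe_lt_coe.mpr (hlt m hm)) (htel m n h)
  -- construct the limit
  have hcau1 : ∀ M : ℝ, ∃ N : ℕ, ∀ m n : ℕ, N ≤ m → N ≤ n →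
      (M : WithTop ℝ) < nvalT ((u m).1 - (u n).1) := by
    intro M
    obtain ⟨N, hN⟩ := hcau M
    refine ⟨N, fun m n hm hn => lt_of_lt_of_le (hN m n hm hn) ?_⟩
    have := min_le_left (nvalT (u m - u n).1) (nvalT (u m - u n).2)
    rwa [Prod.fst_sub] at this
  have hcau2 : ∀ M : ℝ, ∃ N : ℕ, ∀ m n : ℕ, N ≤ m → N ≤ n →
      (M : WithTop ℝ) < nvalT ((u m).2 - (u n).2) := by
    intro M
    obtain ⟨N, hN⟩ := hcau M
    refine ⟨N, fun m n hm hn => lt_of_lt_of_le (hN m n hm hn) ?_⟩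
    have := min_le_right (nvalT (u m - u n).1) (nvalT (u m - u n).2)
    rwa [Prod.snd_sub] at this
  obtain ⟨L₁, hL₁⟩ := novikov_limit (fun n => (u n).1) hcau1
  obtain ⟨L₂, hL₂⟩ := novikov_limit (fun n => (u n).2) hcau2
  set L : Novikov × Novikov := (L₁, L₂) with hLdef
  have hclose : ∀ M : ℝ, ∃ N : ℕ, ∀ n : ℕ, N ≤ n → (M : WithTop ℝ) < Vm (L - u n) := by
    intro M
    obtain ⟨N₁, hN₁⟩ := hL₁ M
    obtain ⟨N₂, hN₂⟩ := hL₂ M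
    refine ⟨max N₁ N₂, fun n hn => ?_⟩
    have h1 := hN₁ n (le_trans (le_max_left _ _) hn)
    have h2 := hN₂ n (le_trans (le_max_right _ _) hn)
    exact lt_min h1 h2
  -- L is in the ball
  have hLB : Bp L := by
    constructor
    · obtain ⟨N, hN⟩ := hL₁ ε
      have h1 := (hN N le_rfl).le
      have h2 : L₁ = (L₁ - (u N).1) + (u N).1 := by abel
      show ε' ≤ nvalT L₁
      rw [h2]
      exact le_nvalT_add h1 (hB N).1
    · obtain ⟨N, hN⟩ := hL₂ ε
      have h1 := (hN N le_rfl).le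
      have h2 : L₂ = (L₂ - (u N).2) + (u N).2 := by abel
      show ε' ≤ nvalT L₂
      rw [h2]
      exact le_nvalT_add h1 (hB N).2
  -- L is a fixed point
  have hfix : Φ L = L := by
    have hcomp : ∀ M : ℝ, (M : WithTop ℝ) < Vm (Φ L - L) := by
      intro M
      obtain ⟨N, hN⟩ := hclose M
      have h1 : (M : WithTop ℝ) < Vm (Φ L - Φ (u N)) := by
        refine lt_of_lt_of_le (hN N le_rfl) ?_
        refine le_trans ?_ (hcontr L (u N) hLB (hB N))
        exact le_add_of_nonneg_left hεnonneg
      have h2 : (M : WithTop ℝ) < Vm (u (N + 1) - L) := by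
        have hneg : u (N + 1) - L = -(L - u (N + 1)) := by abel
        rw [hneg, Vm_neg]
        exact hN (N + 1) (Nat.le_succ N)
      have hsplit : Φ L - L = (Φ L - Φ (u N)) + (u (N + 1) - L) := by
        rw [husucc]; abel
      rw [hsplit]
      exact lt_of_lt_of_le (lt_min h1 h2) min_Vm_le_Vm_add
    have e1 : (Φ L - L).1 = 0 := by
      apply eq_zero_of_forall_lt_nvalT
      intro M
      refine lt_of_lt_of_le (hcomp M) ?_
      exact min_le_left _ _
    have e2 : (Φ L - L).2 = 0 := by
      apply eq_zero_of_forall_lt_nvalT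
      intro M
      refine lt_of_lt_of_le (hcomp M) ?_
      exact min_le_right _ _
    have : Φ L - L = 0 := by
      ext
      · rw [e1]; rfl
      · rw [e2]; rfl
    exact sub_eq_zero.mp this
  -- conclusion
  refine ⟨L, ⟨⟨hLB.1, hLB.2⟩, ?_, ?_⟩, ?_⟩
  · exact ((hsol L).mp hfix).1
  · exact ((hsol L).mp hfix).2
  · rintro y ⟨⟨hy1, hy2⟩, heq1, heq2⟩
    have hyB : Bp y := ⟨hy1, hy2⟩
    have hyfix : Φ y = y := (hsol y).mpr ⟨heq1, heq2⟩
    by_contra hne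
    have hne' : y - L ≠ 0 := sub_ne_zero.mpr hne
    have hVfin : Vm (y - L) ≠ ⊤ := by
      intro htop
      apply hne'
      have hmin := min_eq_top.mp htop
      have hz1 : (y - L).1 = 0 := HahnSeries.orderTop_eq_top.mp hmin.1
      have hz2 : (y - L).2 = 0 := HahnSeries.orderTop_eq_top.mp hmin.2
      ext
      · rw [hz1]; rfl
      · rw [hz2]; rfl
    have hcon := hcontr y L hyB hLB
    rw [hyfix, hfix] at hcon
    obtain ⟨r, hr⟩ := WithTop.ne_top_iff_exists.mp hVfin
    rw [← hr, hε'def, ← WithTop.coe_add, WithTop.coe_le_coe] at hcon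
    linarith


end
end

section
/- Let l ≥ 1 and let ε_1, …, ε_l be pairwise distinct positive real numbers. The polynomial W̄ = z_2 + z_1·∏_{i=1}^{l}(1 + T^{−ε_i}·z_2) over Λ has exactly l critical points in (Λ^×)², all nondegenerate; they are α_i = ( −T^{ε_i}·∏_{j≠i}(1 − T^{ε_i − ε_j})^{−1}, −T^{ε_i} ) for i = 1, …, l. -/
open Finset MvPolynomial

set_option maxHeartbeats 1000000
set_option synthInstance.maxHeartbeats 1000000

noncomputable section

/-- `z` is a critical point of the two-variable polynomial `W` in `(Λ^×)²`: both
coordinates of `z` are nonzero and both partial derivatives of `W` vanish at `z`. -/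
def PIsCritPt (W : MvPolynomial (Fin 2) Novikov) (z : Fin 2 → Novikov) : Prop :=
  (∀ i, z i ≠ 0) ∧ ∀ i : Fin 2, eval z (pderiv i W) = 0

/-- `z` is a nondegenerate critical point of `W`: a critical point at which the determinant
of the Hessian matrix `(∂²W/∂z_i∂z_j)(z)` is nonzero. -/
def PIsNondegCritPt (W : MvPolynomial (Fin 2) Novikov) (z : Fin 2 → Novikov) : Prop :=
  PIsCritPt W z ∧
    (Matrix.of fun i j : Fin 2 => eval z (pderiv i (pderiv j W))).det ≠ 0

/-- The local model `W̄ = z₂ + z₁ ∏_{i=1}^{l} (1 + T^{-ε_i} z₂)` of the mirror potential near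
a corner of the moment polytope after `l` non-toric blowups of sizes `ε_1, …, ε_l`. -/
def Wbar (l : ℕ) (ε : Fin l → ℝ) : MvPolynomial (Fin 2) Novikov :=
  X 1 + X 0 * ∏ i, (1 + C (Tpow (-ε i)) * X 1)

/-- The critical point of `W̄` associated with the `i`-th blowup:
`α_i = (-T^{ε_i} ∏_{j ≠ i} (1 - T^{ε_i - ε_j})⁻¹, -T^{ε_i})`. -/
def alphPt (l : ℕ) (ε : Fin l → ℝ) (i : Fin l) : Fin 2 → Novikov :=
  ![-(Tpow (ε i)) * ∏ j ∈ Finset.univ.erase i, (1 - Tpow (ε i - ε j))⁻¹, -(Tpow (ε i))]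

lemma Tpow_add (a b : ℝ) : Tpow a * Tpow b = Tpow (a + b) := by
  simp [Tpow, HahnSeries.single_mul_single]

lemma Tpow_zero' : Tpow 0 = 1 := HahnSeries.single_zero_one

lemma Tpow_ne_zero (a : ℝ) : Tpow a ≠ 0 := HahnSeries.single_ne_zero one_ne_zero

lemma Tpow_injective : Function.Injective Tpow := by
  intro a b h
  by_contra hab
  have h2 : (Tpow a).coeff a = (Tpow b).coeff a := congrArg (fun x : Novikov => x.coeff a) h
  rw [show (Tpow a).coeff a = 1 from HahnSeries.coeff_single_same a 1] at h2
  rw [show (Tpow b).coeff a = 0 from HahnSeries.coeff_single_of_ne hab] at h2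
  exact one_ne_zero h2

lemma one_sub_Tpow_ne_zero {d : ℝ} (hd : d ≠ 0) : (1 : Novikov) - Tpow d ≠ 0 := by
  rw [sub_ne_zero]
  intro h
  exact hd (Tpow_injective (Tpow_zero'.trans h)).symm

lemma pderiv_finset_prod {ι : Type*} [DecidableEq ι] (i : Fin 2)
    (s : Finset ι) (f : ι → MvPolynomial (Fin 2) Novikov) :
    pderiv i (∏ j ∈ s, f j) = ∑ j ∈ s, pderiv i (f j) * ∏ k ∈ s.erase j, f k := by
  induction s using Finset.induction_on with
  | empty => simp
  | @insert a s ha ih =>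
    rw [Finset.prod_insert ha, pderiv_mul, ih, Finset.sum_insert ha,
        Finset.erase_insert ha, Finset.mul_sum]
    congr 1
    refine Finset.sum_congr rfl fun j hj => ?_
    have hja : a ≠ j := fun h => ha (h ▸ hj)
    rw [Finset.erase_insert_of_ne hja,
        Finset.prod_insert (fun h => ha (Finset.mem_of_mem_erase h))]
    ring

/-- The local computation in Theorem 5.11 of the paper: for `l ≥ 1` and pairwise distinct
positive reals `ε_1, …, ε_l`, the polynomial `W̄ = z₂ + z₁ ∏_{i=1}^{l} (1 + T^{-ε_i} z₂)`
over the Novikov field has exactly `l` critical points in `(Λ^×)²`, all nondegenerate,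
namely the pairwise distinct points
`α_i = (-T^{ε_i} ∏_{j ≠ i} (1 - T^{ε_i - ε_j})⁻¹, -T^{ε_i})`, `i = 1, …, l`. -/
theorem nontoric_local_model_critical_points
    (l : ℕ) (hl : 1 ≤ l) (ε : Fin l → ℝ)
    (hpos : ∀ i, 0 < ε i) (hinj : Function.Injective ε) :
    (∀ z : Fin 2 → Novikov, PIsCritPt (Wbar l ε) z ↔ ∃ i, z = alphPt l ε i) ∧
    (∀ i, PIsNondegCritPt (Wbar l ε) (alphPt l ε i)) ∧
    Function.Injective (alphPt l ε) := by
  classical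
  set f : Fin l → MvPolynomial (Fin 2) Novikov :=
    fun j => 1 + C (Tpow (-ε j)) * X 1 with hf
  have hW : Wbar l ε = X 1 + X 0 * ∏ j, f j := rfl
  have h10 : (1 : Fin 2) ≠ 0 := by decide
  have h01 : (0 : Fin 2) ≠ 1 := by decide
  have hf0 : ∀ j, pderiv (0 : Fin 2) (f j) = 0 := by
    intro j
    simp [hf, pderiv_X_of_ne h10]
  have hf1 : ∀ j, pderiv (1 : Fin 2) (f j) = C (Tpow (-ε j)) := by
    intro j
    simp [hf, pderiv_C_mul]
  have hP0 : pderiv (0 : Fin 2) (∏ j, f j) = 0 := by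
    rw [pderiv_finset_prod]; simp [hf0]
  set D : MvPolynomial (Fin 2) Novikov :=
    ∑ j, C (Tpow (-ε j)) * ∏ k ∈ Finset.univ.erase j, f k with hDdef
  have hP1 : pderiv (1 : Fin 2) (∏ j, f j) = D := by
    rw [pderiv_finset_prod, hDdef]
    exact Finset.sum_congr rfl fun j _ => by rw [hf1]
  have hD0 : pderiv (0 : Fin 2) D = 0 := by
    rw [hDdef, map_sum]
    refine Finset.sum_eq_zero fun j _ => ?_
    rw [pderiv_C_mul, pderiv_finset_prod]
    simp [hf0]
  have hd0 : pderiv (0 : Fin 2) (Wbar l ε) = ∏ j, f j := by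
    rw [hW, map_add, pderiv_mul, hP0, pderiv_X_self, pderiv_X_of_ne h10]
    ring
  have hd1 : pderiv (1 : Fin 2) (Wbar l ε) = 1 + X 0 * D := by
    rw [hW, map_add, pderiv_mul, hP1, pderiv_X_self, pderiv_X_of_ne h01]
    ring
  have hevalf : ∀ (z : Fin 2 → Novikov) (k : Fin l),
      eval z (f k) = 1 + Tpow (-ε k) * z 1 := by
    intro z k; simp [hf]
  have hfe : ∀ (i : Fin l) (z : Fin 2 → Novikov), z 1 = -Tpow (ε i) →
      ∀ k, eval z (f k) = 1 - Tpow (ε i - ε k) := by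
    intro i z hz k
    have key : Tpow (-ε k) * Tpow (ε i) = Tpow (ε i - ε k) := by
      rw [Tpow_add, show -ε k + ε i = ε i - ε k from by ring]
    rw [hevalf, hz]
    linear_combination -key
  have hfei : ∀ (i : Fin l) (z : Fin 2 → Novikov), z 1 = -Tpow (ε i) →
      eval z (f i) = 0 := by
    intro i z hz
    rw [hfe i z hz i, sub_self, Tpow_zero']
    ring
  have hevalD : ∀ (i : Fin l) (z : Fin 2 → Novikov), z 1 = -Tpow (ε i) →
      eval z D = Tpow (-ε i) * ∏ k ∈ Finset.univ.erase i, (1 - Tpow (ε i - ε k)) := by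
    intro i z hz
    rw [hDdef, map_sum, Finset.sum_eq_single_of_mem i (Finset.mem_univ i)]
    · rw [map_mul, eval_C, map_prod]
      congr 1
      exact Finset.prod_congr rfl fun k _ => hfe i z hz k
    · intro j _ hji
      rw [map_mul, map_prod,
        Finset.prod_eq_zero (Finset.mem_erase.mpr ⟨Ne.symm hji, Finset.mem_univ i⟩)
          (hfei i z hz), mul_zero]
  have hdsub : ∀ (i j : Fin l), j ≠ i → ε i - ε j ≠ 0 := by
    intro i j hji h
    exact hji ((hinj (sub_eq_zero.mp h).symm))
  have hSne : ∀ i, Tpow (-ε i) * ∏ k ∈ Finset.univ.erase i, (1 - Tpow (ε i - ε k)) ≠ 0 := by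
    intro i
    refine mul_ne_zero (Tpow_ne_zero _) (Finset.prod_ne_zero_iff.mpr fun k hk => ?_)
    exact one_sub_Tpow_ne_zero (hdsub i k (Finset.mem_erase.mp hk).1)
  have halph1 : ∀ i, alphPt l ε i 1 = -Tpow (ε i) := fun i => rfl
  have halph0e : ∀ i, alphPt l ε i 0
      = -(Tpow (ε i)) * ∏ j ∈ Finset.univ.erase i, (1 - Tpow (ε i - ε j))⁻¹ := fun i => rfl
  have halph0 : ∀ i, alphPt l ε i 0 *
      (Tpow (-ε i) * ∏ k ∈ Finset.univ.erase i, (1 - Tpow (ε i - ε k))) = -1 := by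
    intro i
    rw [halph0e]
    have h1 : Tpow (ε i) * Tpow (-ε i) = 1 := by
      rw [Tpow_add, add_neg_cancel, Tpow_zero']
    have h2 : (∏ j ∈ Finset.univ.erase i, (1 - Tpow (ε i - ε j))⁻¹) *
        (∏ k ∈ Finset.univ.erase i, (1 - Tpow (ε i - ε k))) = 1 := by
      rw [← Finset.prod_mul_distrib]
      exact Finset.prod_eq_one fun k hk =>
        inv_mul_cancel₀ (one_sub_Tpow_ne_zero (hdsub i k (Finset.mem_erase.mp hk).1))
    calc (-(Tpow (ε i)) * ∏ j ∈ Finset.univ.erase i, (1 - Tpow (ε i - ε j))⁻¹) *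
          (Tpow (-ε i) * ∏ k ∈ Finset.univ.erase i, (1 - Tpow (ε i - ε k)))
        = -((Tpow (ε i) * Tpow (-ε i)) *
            ((∏ j ∈ Finset.univ.erase i, (1 - Tpow (ε i - ε j))⁻¹) *
             (∏ k ∈ Finset.univ.erase i, (1 - Tpow (ε i - ε k))))) := by ring
      _ = -1 := by rw [h1, h2, one_mul]
  have halphne : ∀ i (k : Fin 2), alphPt l ε i k ≠ 0 := by
    intro i k
    fin_cases k
    · show alphPt l ε i 0 ≠ 0
      rw [halph0e]
      refine mul_ne_zero (neg_ne_zero.mpr (Tpow_ne_zero _))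
        (Finset.prod_ne_zero_iff.mpr fun j hj => inv_ne_zero ?_)
      exact one_sub_Tpow_ne_zero (hdsub i j (Finset.mem_erase.mp hj).1)
    · show alphPt l ε i 1 ≠ 0
      rw [halph1]
      exact neg_ne_zero.mpr (Tpow_ne_zero _)
  have hcrit : ∀ z, PIsCritPt (Wbar l ε) z ↔ ∃ i, z = alphPt l ε i := by
    intro z
    constructor
    · rintro ⟨hz, hcr⟩
      have h0 := hcr 0
      have h1 := hcr 1
      rw [hd0, map_prod] at h0
      obtain ⟨i, -, hi⟩ := Finset.prod_eq_zero_iff.mp h0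
      have hz1 : z 1 = -Tpow (ε i) := by
        rw [hevalf] at hi
        have h1 : Tpow (ε i) * Tpow (-ε i) = 1 := by
          rw [Tpow_add, add_neg_cancel, Tpow_zero']
        linear_combination Tpow (ε i) * hi - z 1 * h1
      have hDz := hevalD i z hz1
      rw [hd1, map_add, map_mul, map_one, eval_X, hDz] at h1
      have hz0 : z 0 * (Tpow (-ε i) * ∏ k ∈ Finset.univ.erase i, (1 - Tpow (ε i - ε k)))
          = -1 := by linear_combination h1
      have hz0' : z 0 = alphPt l ε i 0 :=
        mul_right_cancel₀ (hSne i) (hz0.trans (halph0 i).symm)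
      refine ⟨i, funext fun k => ?_⟩
      fin_cases k
      · exact hz0'
      · exact hz1.trans (halph1 i).symm
    · rintro ⟨i, rfl⟩
      refine ⟨halphne i, ?_⟩
      intro k
      fin_cases k
      · show eval (alphPt l ε i) (pderiv (0 : Fin 2) (Wbar l ε)) = 0
        rw [hd0, map_prod]
        exact Finset.prod_eq_zero (Finset.mem_univ i) (hfei i _ (halph1 i))
      · show eval (alphPt l ε i) (pderiv (1 : Fin 2) (Wbar l ε)) = 0
        rw [hd1, map_add, map_mul, map_one, eval_X, hevalD i _ (halph1 i)]
        linear_combination halph0 i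
  refine ⟨hcrit, ?_, ?_⟩
  · intro i
    refine ⟨(hcrit _).mpr ⟨i, rfl⟩, ?_⟩
    have e00 : eval (alphPt l ε i) (pderiv (0 : Fin 2) (pderiv (0 : Fin 2) (Wbar l ε))) = 0 := by
      rw [hd0, hP0, map_zero]
    have e01 : eval (alphPt l ε i) (pderiv (0 : Fin 2) (pderiv (1 : Fin 2) (Wbar l ε)))
        = Tpow (-ε i) * ∏ k ∈ Finset.univ.erase i, (1 - Tpow (ε i - ε k)) := by
      rw [hd1, map_add, pderiv_one, pderiv_mul, pderiv_X_self, hD0, mul_zero, one_mul,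
        add_zero, zero_add]
      exact hevalD i _ (halph1 i)
    have e10 : eval (alphPt l ε i) (pderiv (1 : Fin 2) (pderiv (0 : Fin 2) (Wbar l ε)))
        = Tpow (-ε i) * ∏ k ∈ Finset.univ.erase i, (1 - Tpow (ε i - ε k)) := by
      rw [hd0, hP1]
      exact hevalD i _ (halph1 i)
    rw [Matrix.det_fin_two]
    simp only [Matrix.of_apply]
    rw [e00, e01, e10]
    intro hcontra
    exact mul_ne_zero (hSne i) (hSne i) (by linear_combination -hcontra)
  · intro i j h
    have h1 := congrFun h 1
    rw [halph1, halph1] at h1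
    have h2 : Tpow (ε i) = Tpow (ε j) := by linear_combination -h1
    exact hinj (Tpow_injective h2)

end
end

section
/- Let k be an algebraically closed field of characteristic 0 and let u, v, w ∈ ℤ² be pairwise distinct exponent vectors such that det(u,v) ≠ 0, det(v,w) ≠ 0, det(u,w) ≠ 0, and D := det(u−w, v−w) ≠ 0, where det of two integer vectors denotes the determinant of the 2×2 matrix with those rows. Then for every choice of coefficients a, b, c ∈ k^×, the trinomial Laurent polynomial f = a·z^u + b·z^v + c·z^w has exactly |D| critical points in (k^×)². -/
open Finset

noncomputable section

variable {K : Type*} [Field K]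

section aux

variable {k : Type*} [Field k] [IsAlgClosed k] [CharZero k]

lemma zroots_nat (n : ℕ) (hn : n ≠ 0) (c : k) (hc : c ≠ 0) :
    ∃ T : Finset k, (∀ x, x ∈ T ↔ x ^ n = c) ∧ T.card = n := by
  classical
  refine ⟨(Polynomial.nthRoots n c).toFinset, ?_, ?_⟩
  · intro x
    rw [Multiset.mem_toFinset, Polynomial.mem_nthRoots (Nat.pos_of_ne_zero hn)]
  · have hsep : (Polynomial.X ^ n - Polynomial.C c).Separable :=
      Polynomial.separable_X_pow_sub_C c (by exact_mod_cast hn) hc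
    have hnd := Polynomial.nodup_roots hsep
    have heq : Polynomial.nthRoots n c = (Polynomial.X ^ n - Polynomial.C c).roots := rfl
    rw [heq, Multiset.toFinset_card_of_nodup hnd]
    have hs : Multiset.card (Polynomial.X ^ n - Polynomial.C c).roots
        = (Polynomial.X ^ n - Polynomial.C c).natDegree :=
      Polynomial.splits_iff_card_roots.mp (IsAlgClosed.splits _)
    rw [hs, Polynomial.natDegree_X_pow_sub_C]

lemma zroots (m : ℤ) (hm : m ≠ 0) (c : k) (hc : c ≠ 0) :
    ∃ T : Finset k, (∀ x, x ∈ T ↔ x ^ m = c) ∧ T.card = m.natAbs := by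
  rcases lt_or_gt_of_ne hm with h | h
  · obtain ⟨T, hT, hcard⟩ := zroots_nat m.natAbs (by omega) c⁻¹ (inv_ne_zero hc)
    refine ⟨T, fun x => ?_, hcard⟩
    rw [hT]
    by_cases hx0 : x = 0
    · subst hx0
      rw [zero_zpow m hm, zero_pow (by omega : m.natAbs ≠ 0)]
      constructor
      · intro h'; exact absurd h'.symm (inv_ne_zero hc)
      · intro h'; exact absurd h'.symm hc
    · have hxm : x ^ m = (x ^ m.natAbs)⁻¹ := by
        rw [← zpow_natCast, ← zpow_neg]
        congr 1
        omega
      rw [hxm, inv_eq_iff_eq_inv]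
  · obtain ⟨T, hT, hcard⟩ := zroots_nat m.natAbs (by omega) c hc
    refine ⟨T, fun x => ?_, hcard⟩
    rw [hT, ← zpow_natCast]
    congr! 2
    omega

lemma count_base (a b d : ℤ) (ha : a ≠ 0) (hd : d ≠ 0) (A B : k) (hA : A ≠ 0) (hB : B ≠ 0) :
    {p : k × k | p.1 ≠ 0 ∧ p.2 ≠ 0 ∧ p.1 ^ a * p.2 ^ b = A ∧ p.1 ^ (0:ℤ) * p.2 ^ d = B}.ncard
      = (a * d - b * 0).natAbs := by
  classical
  obtain ⟨T, hT, hTcard⟩ := zroots d hd B hB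
  have hTne : ∀ y ∈ T, y ≠ 0 := by
    intro y hy h0
    rw [hT] at hy
    rw [h0, zero_zpow d hd] at hy
    exact hB hy.symm
  have key : ∀ y : k, y ≠ 0 →
      ∃ F : Finset k, (∀ x, x ∈ F ↔ x ^ a = A / y ^ b) ∧ F.card = a.natAbs := by
    intro y hy
    exact zroots a ha _ (div_ne_zero hA (zpow_ne_zero _ hy))
  choose F hF hFcard using key
  set G : {t // t ∈ T} → Finset (k × k) :=
    fun y => (F y.1 (hTne y.1 y.2)).image (fun x => (x, y.1)) with hG
  have hset : {p : k × k | p.1 ≠ 0 ∧ p.2 ≠ 0 ∧ p.1 ^ a * p.2 ^ b = A ∧ p.1 ^ (0:ℤ) * p.2 ^ d = B}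
      = ↑(T.attach.biUnion G) := by
    ext ⟨x, y⟩
    rw [Set.mem_setOf_eq, Finset.mem_coe, Finset.mem_biUnion]
    constructor
    · rintro ⟨hx, hy, he1, he2⟩
      rw [zpow_zero, one_mul] at he2
      have hyT : y ∈ T := (hT y).mpr he2
      refine ⟨⟨y, hyT⟩, Finset.mem_attach _ _, ?_⟩
      rw [hG, Finset.mem_image]
      refine ⟨x, ?_, rfl⟩
      rw [hF y (hTne y hyT), eq_div_iff (zpow_ne_zero _ hy)]
      exact he1
    · rintro ⟨⟨y', hy'⟩, -, hmem⟩
      rw [hG, Finset.mem_image] at hmem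
      obtain ⟨x', hx', hxy⟩ := hmem
      have hyne := hTne _ hy'
      have hxa := (hF _ hyne _).mp hx'
      have hBy := (hT y').mp hy'
      injection hxy with hxe hye
      subst hxe
      subst hye
      have hxne : x' ≠ 0 := by
        intro h0
        rw [h0, zero_zpow a ha] at hxa
        exact div_ne_zero hA (zpow_ne_zero _ hyne) hxa.symm
      refine ⟨hxne, hyne, ?_, ?_⟩
      · rw [hxa, div_mul_cancel₀]
        exact zpow_ne_zero _ hyne
      · rw [zpow_zero, one_mul]
        exact hBy
  rw [hset, Set.ncard_coe_finset, Finset.card_biUnion]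
  · have hc : ∀ y ∈ T.attach, (G y).card = a.natAbs := by
      intro y _
      rw [hG]
      rw [Finset.card_image_of_injective _ (fun x1 x2 h2 => congrArg Prod.fst h2)]
      exact hFcard y.1 (hTne y.1 y.2)
    rw [Finset.sum_congr rfl hc, Finset.sum_const, Finset.card_attach, hTcard, smul_eq_mul]
    have : a * d - b * 0 = a * d := by ring
    rw [this, Int.natAbs_mul, mul_comm]
  · rintro ⟨y1, hy1⟩ - ⟨y2, hy2⟩ - hne
    rw [Function.onFun, Finset.disjoint_left]
    rintro ⟨x, y⟩ hmem1 hmem2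
    rw [hG, Finset.mem_image] at hmem1 hmem2
    obtain ⟨x1, -, hxy1⟩ := hmem1
    obtain ⟨x2, -, hxy2⟩ := hmem2
    apply hne
    have e1 : y1 = y := congrArg Prod.snd hxy1
    have e2 : y2 = y := congrArg Prod.snd hxy2
    exact Subtype.ext (e1.trans e2.symm)

lemma count_pairs : ∀ (N : ℕ) (a b c d : ℤ), c.natAbs ≤ N → a * d - b * c ≠ 0 →
    ∀ (A B : k), A ≠ 0 → B ≠ 0 →
    {p : k × k | p.1 ≠ 0 ∧ p.2 ≠ 0 ∧ p.1 ^ a * p.2 ^ b = A ∧ p.1 ^ c * p.2 ^ d = B}.ncard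
      = (a * d - b * c).natAbs := by
  intro N
  induction N with
  | zero =>
    intro a b c d hc hdet A B hA hB
    have hc0 : c = 0 := by omega
    subst hc0
    exact count_base a b d (by intro h; apply hdet; rw [h]; ring)
      (by intro h; apply hdet; rw [h]; ring) A B hA hB
  | succ N ih =>
    intro a b c d hc hdet A B hA hB
    by_cases hcN : c.natAbs ≤ N
    · exact ih a b c d hcN hdet A B hA hB
    have hc0 : c ≠ 0 := by omega
    obtain ⟨q, r, har, hrlt⟩ : ∃ q r : ℤ, a = c * q + r ∧ r.natAbs ≤ N := by
      refine ⟨a / c, a % c, (Int.mul_ediv_add_emod a c).symm, ?_⟩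
      have h0 : 0 ≤ a % c := Int.emod_nonneg a hc0
      have h' : a % c < |c| := by
        rcases lt_or_gt_of_ne hc0 with hcneg | hcpos
        · have h'' := Int.emod_lt_of_pos a (show (0:ℤ) < -c by omega)
          rw [Int.emod_neg] at h''
          rwa [abs_of_neg hcneg]
        · rw [abs_of_pos hcpos]
          exact Int.emod_lt_of_pos a hcpos
      have h2' := Int.natAbs_lt_natAbs_of_nonneg_of_lt h0 h'
      rw [Int.natAbs_abs] at h2'
      omega
    have keyid : ∀ x y : k, x ≠ 0 → y ≠ 0 →
        x ^ a * y ^ b = (x ^ r * y ^ (b - q * d)) * (x ^ c * y ^ d) ^ q := by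
      intro x y hx hy
      rw [mul_zpow, ← zpow_mul, ← zpow_mul, har, zpow_add₀ hx (c * q) r]
      have hb : (b : ℤ) = (b - q * d) + d * q := by ring
      calc x ^ (c * q) * x ^ r * y ^ b
          = x ^ (c * q) * x ^ r * (y ^ ((b - q * d) + d * q)) := by rw [← hb]
        _ = x ^ r * y ^ (b - q * d) * (x ^ (c * q) * y ^ (d * q)) := by
            rw [zpow_add₀ hy]; ring
    have hset : {p : k × k | p.1 ≠ 0 ∧ p.2 ≠ 0 ∧ p.1 ^ a * p.2 ^ b = A ∧ p.1 ^ c * p.2 ^ d = B}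
        = {p : k × k | p.1 ≠ 0 ∧ p.2 ≠ 0 ∧ p.1 ^ c * p.2 ^ d = B ∧
            p.1 ^ r * p.2 ^ (b - q * d) = A / B ^ q} := by
      ext ⟨x, y⟩
      simp only [Set.mem_setOf_eq]
      constructor
      · rintro ⟨hx, hy, he1, he2⟩
        refine ⟨hx, hy, he2, ?_⟩
        rw [eq_div_iff (zpow_ne_zero _ hB), ← he2, ← keyid x y hx hy]
        exact he1
      · rintro ⟨hx, hy, he2, he1⟩
        refine ⟨hx, hy, ?_, he2⟩
        rw [keyid x y hx hy, he2, he1, div_mul_cancel₀]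
        exact zpow_ne_zero _ hB
    rw [hset]
    have hdeteq : c * (b - q * d) - d * r = -(a * d - b * c) := by rw [har]; ring
    have hdet' : c * (b - q * d) - d * r ≠ 0 := by
      rw [hdeteq]
      exact neg_ne_zero.mpr hdet
    have hres := ih c d r (b - q * d) hrlt hdet' B (A / B ^ q) hB
      (div_ne_zero hA (zpow_ne_zero _ hB))
    rw [hres, hdeteq, Int.natAbs_neg]

set_option linter.unusedSectionVars false in
lemma transfer_pairs (Q : k → k → Prop) :
    {z : Fin 2 → k | Q (z 0) (z 1)}.ncard = {p : k × k | Q p.1 p.2}.ncard := by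
  have hinj : Function.Injective (fun z : Fin 2 → k => (z 0, z 1)) := by
    intro z1 z2 h
    funext i
    fin_cases i
    · exact congrArg Prod.fst h
    · exact congrArg Prod.snd h
  rw [← Set.ncard_image_of_injective _ hinj]
  congr 1
  ext ⟨x, y⟩
  simp only [Set.mem_image, Set.mem_setOf_eq]
  constructor
  · rintro ⟨z, hz, hzx⟩
    have e1 : z 0 = x := congrArg Prod.fst hzx
    have e2 : z 1 = y := congrArg Prod.snd hzx
    rwa [e1, e2] at hz
  · intro hQ
    exact ⟨![x, y], by simpa using hQ, by simp⟩

end aux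

/-- The computation asserted in Remark 4.8 of the paper. -/
theorem trinomial_critical_points
    (k : Type*) [Field k] [IsAlgClosed k] [CharZero k]
    (u v w : Fin 2 → ℤ) (huv : u ≠ v) (hvw : v ≠ w) (huw : u ≠ w)
    (h1 : u 0 * v 1 - u 1 * v 0 ≠ 0)
    (h2 : v 0 * w 1 - v 1 * w 0 ≠ 0)
    (h3 : u 0 * w 1 - u 1 * w 0 ≠ 0)
    (hD : (u 0 - w 0) * (v 1 - w 1) - (u 1 - w 1) * (v 0 - w 0) ≠ 0)
    (a : (Fin 2 → ℤ) → k) (hau : a u ≠ 0) (hav : a v ≠ 0) (haw : a w ≠ 0) :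
    Set.ncard {z : Fin 2 → k | LIsCritPt ({u, v, w} : Finset (Fin 2 → ℤ)) a z}
      = ((u 0 - w 0) * (v 1 - w 1) - (u 1 - w 1) * (v 0 - w 0)).natAbs := by
  classical
  have hpne : ((v 0 * w 1 - v 1 * w 0 : ℤ) : k) ≠ 0 := Int.cast_ne_zero.mpr h2
  have hqne : ((-(u 0 * w 1 - u 1 * w 0) : ℤ) : k) ≠ 0 :=
    Int.cast_ne_zero.mpr (neg_ne_zero.mpr h3)
  have hrne : ((u 0 * v 1 - u 1 * v 0 : ℤ) : k) ≠ 0 := Int.cast_ne_zero.mpr h1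
  set A : k := a w * ((v 0 * w 1 - v 1 * w 0 : ℤ) : k) / (a u * ((u 0 * v 1 - u 1 * v 0 : ℤ) : k))
    with hA'
  set B : k := a w * ((-(u 0 * w 1 - u 1 * w 0) : ℤ) : k) / (a v * ((u 0 * v 1 - u 1 * v 0 : ℤ) : k))
    with hB'
  have hA : A ≠ 0 := div_ne_zero (mul_ne_zero haw hpne) (mul_ne_zero hau hrne)
  have hB : B ≠ 0 := div_ne_zero (mul_ne_zero haw hqne) (mul_ne_zero hav hrne)
  have hsum : ∀ f : (Fin 2 → ℤ) → k, ∑ x ∈ ({u, v, w} : Finset (Fin 2 → ℤ)), f x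
      = f u + (f v + f w) := by
    intro f
    rw [Finset.sum_insert (by simp [huv, huw]), Finset.sum_insert (by simp [hvw]),
      Finset.sum_singleton]
  have hlm : ∀ (m : Fin 2 → ℤ) (z : Fin 2 → k), lmono z m = z 0 ^ m 0 * z 1 ^ m 1 := by
    intro m z
    rw [lmono, Fin.prod_univ_two]
  have hset : {z : Fin 2 → k | LIsCritPt ({u, v, w} : Finset (Fin 2 → ℤ)) a z}
      = {z : Fin 2 → k | z 0 ≠ 0 ∧ z 1 ≠ 0 ∧
          z 0 ^ (u 0 - w 0) * z 1 ^ (u 1 - w 1) = A ∧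
          z 0 ^ (v 0 - w 0) * z 1 ^ (v 1 - w 1) = B} := by
    ext z
    simp only [Set.mem_setOf_eq, LIsCritPt, Fin.forall_fin_two]
    constructor
    · rintro ⟨⟨hz0, hz1⟩, hd0, hd1⟩
      simp only [lpderiv, hsum, hlm] at hd0 hd1
      rw [← add_div, ← add_div, div_eq_zero_iff] at hd0 hd1
      have e0 := hd0.resolve_right hz0
      have e1 := hd1.resolve_right hz1
      have k1 : a u * (z 0 ^ u 0 * z 1 ^ u 1) * ((u 0 * v 1 - u 1 * v 0 : ℤ) : k)
          = a w * (z 0 ^ w 0 * z 1 ^ w 1) * ((v 0 * w 1 - v 1 * w 0 : ℤ) : k) := by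
        push_cast
        linear_combination ((v 1 : ℤ) : k) * e0 - ((v 0 : ℤ) : k) * e1
      have k2 : a v * (z 0 ^ v 0 * z 1 ^ v 1) * ((u 0 * v 1 - u 1 * v 0 : ℤ) : k)
          = a w * (z 0 ^ w 0 * z 1 ^ w 1) * ((-(u 0 * w 1 - u 1 * w 0) : ℤ) : k) := by
        push_cast
        linear_combination ((u 0 : ℤ) : k) * e1 - ((u 1 : ℤ) : k) * e0
      refine ⟨hz0, hz1, ?_, ?_⟩
      · rw [zpow_sub₀ hz0, zpow_sub₀ hz1, div_mul_div_comm, hA',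
          div_eq_div_iff (mul_ne_zero (zpow_ne_zero _ hz0) (zpow_ne_zero _ hz1))
            (mul_ne_zero hau hrne)]
        linear_combination k1
      · rw [zpow_sub₀ hz0, zpow_sub₀ hz1, div_mul_div_comm, hB',
          div_eq_div_iff (mul_ne_zero (zpow_ne_zero _ hz0) (zpow_ne_zero _ hz1))
            (mul_ne_zero hav hrne)]
        linear_combination k2
    · rintro ⟨hz0, hz1, heA, heB⟩
      rw [zpow_sub₀ hz0, zpow_sub₀ hz1, div_mul_div_comm, hA',
        div_eq_div_iff (mul_ne_zero (zpow_ne_zero _ hz0) (zpow_ne_zero _ hz1))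
          (mul_ne_zero hau hrne)] at heA
      rw [zpow_sub₀ hz0, zpow_sub₀ hz1, div_mul_div_comm, hB',
        div_eq_div_iff (mul_ne_zero (zpow_ne_zero _ hz0) (zpow_ne_zero _ hz1))
          (mul_ne_zero hav hrne)] at heB
      have e0 : a u * ((u 0 : ℤ) : k) * (z 0 ^ u 0 * z 1 ^ u 1)
          + (a v * ((v 0 : ℤ) : k) * (z 0 ^ v 0 * z 1 ^ v 1)
            + a w * ((w 0 : ℤ) : k) * (z 0 ^ w 0 * z 1 ^ w 1)) = 0 := by
        have hmul : (a u * ((u 0 : ℤ) : k) * (z 0 ^ u 0 * z 1 ^ u 1)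
            + (a v * ((v 0 : ℤ) : k) * (z 0 ^ v 0 * z 1 ^ v 1)
              + a w * ((w 0 : ℤ) : k) * (z 0 ^ w 0 * z 1 ^ w 1)))
            * ((u 0 * v 1 - u 1 * v 0 : ℤ) : k) = 0 := by
          push_cast
          push_cast at heA heB
          linear_combination ((u 0 : ℤ) : k) * heA + ((v 0 : ℤ) : k) * heB
        exact (mul_eq_zero.mp hmul).resolve_right hrne
      have e1 : a u * ((u 1 : ℤ) : k) * (z 0 ^ u 0 * z 1 ^ u 1)
          + (a v * ((v 1 : ℤ) : k) * (z 0 ^ v 0 * z 1 ^ v 1)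
            + a w * ((w 1 : ℤ) : k) * (z 0 ^ w 0 * z 1 ^ w 1)) = 0 := by
        have hmul : (a u * ((u 1 : ℤ) : k) * (z 0 ^ u 0 * z 1 ^ u 1)
            + (a v * ((v 1 : ℤ) : k) * (z 0 ^ v 0 * z 1 ^ v 1)
              + a w * ((w 1 : ℤ) : k) * (z 0 ^ w 0 * z 1 ^ w 1)))
            * ((u 0 * v 1 - u 1 * v 0 : ℤ) : k) = 0 := by
          push_cast
          push_cast at heA heB
          linear_combination ((u 1 : ℤ) : k) * heA + ((v 1 : ℤ) : k) * heB
        exact (mul_eq_zero.mp hmul).resolve_right hrne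
      refine ⟨⟨hz0, hz1⟩, ?_, ?_⟩
      · simp only [lpderiv, hsum, hlm]
        rw [← add_div, ← add_div, div_eq_zero_iff]
        exact Or.inl e0
      · simp only [lpderiv, hsum, hlm]
        rw [← add_div, ← add_div, div_eq_zero_iff]
        exact Or.inl e1
  rw [hset]
  have := transfer_pairs (k := k) (fun s t => s ≠ 0 ∧ t ≠ 0 ∧
    s ^ (u 0 - w 0) * t ^ (u 1 - w 1) = A ∧ s ^ (v 0 - w 0) * t ^ (v 1 - w 1) = B)
  rw [this]
  exact count_pairs (v 0 - w 0).natAbs (u 0 - w 0) (u 1 - w 1) (v 0 - w 0) (v 1 - w 1)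
    le_rfl hD A B hA hB

end
end
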